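/- Let f : X → Y be a map between metric spaces such that for every κ ∈ (0,1) there is ε_0 > 0 with d_Y(f(x),f(x')) < d_X(x,x')^κ whenever d_X(x,x') < ε_0. Let φ, ψ be Hausdorff functions such that for some κ ∈ (0,1) and ε_1 > 0 one has ψ(ε^κ) < φ(ε) for all ε ∈ (0,ε_1). Then H^ψ(f(X)) ≤ H^φ(X) for the associated generalized Hausdorff measures. -/

import Mathlib

open scoped ENNReal
open Filter Topology MeasureTheory Metric

/-- Hausdorff functions: continuous nondecreasing, vanishing exactly at `0`. -/
def IsHausdorffFn (φ : ℝ → ℝ) : Prop :=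
  ContinuousOn φ (Set.Ici 0) ∧ MonotoneOn φ (Set.Ici 0) ∧ φ 0 = 0 ∧ ∀ ε > 0, 0 < φ ε

/-- The generalized `φ`-Hausdorff measure of a subset of a metric space, via countable
covers by open balls of radii at most `ε`, letting `ε → 0`. -/
noncomputable def Hmeas {Z : Type*} [MetricSpace Z] (φ : ℝ → ℝ) (S : Set Z) : ℝ≥0∞ :=
  ⨆ (ε : ℝ) (_ : 0 < ε),
    ⨅ (c : ℕ → Z × ℝ)
      (_ : (∀ i, 0 ≤ (c i).2 ∧ (c i).2 ≤ ε) ∧ S ⊆ ⋃ i, ball (c i).1 (c i).2),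
      ∑' i, ENNReal.ofReal (φ (c i).2)

/-- The generalized `φ`-packing premeasure of a subset of a metric space, via countable
packs of disjoint open balls centered in the set, of radii at most `ε`, letting `ε → 0`. -/
noncomputable def Pmeas0 {Z : Type*} [MetricSpace Z] (φ : ℝ → ℝ) (S : Set Z) : ℝ≥0∞ :=
  ⨅ (ε : ℝ) (_ : 0 < ε),
    ⨆ (c : ℕ → Z × ℝ)
      (_ : (∀ i, (c i).1 ∈ S ∧ 0 ≤ (c i).2 ∧ (c i).2 ≤ ε) ∧
        Pairwise fun i j => Disjoint (ball (c i).1 (c i).2) (ball (c j).1 (c j).2)),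
      ∑' i, ENNReal.ofReal (φ (c i).2)

/-- The generalized `φ`-packing measure. -/
noncomputable def Pmeas {Z : Type*} [MetricSpace Z] (φ : ℝ → ℝ) (S : Set Z) : ℝ≥0∞ :=
  ⨅ (F : ℕ → Set Z) (_ : S ⊆ ⋃ m, F m), ∑' m, Pmeas0 φ (F m)

/-!
An `ε`-cover of `X` by balls `B(xᵢ, rᵢ)` is mapped by `f` to the cover of `f(X)` by the balls
`B(f xᵢ, rᵢ^κ)`, since `f` is `κ`-Hölder at small scales. Once `ε` is small, the new radii are
small too and `ψ(rᵢ^κ) ≤ φ(rᵢ)` termwise, so every cover sum for `H^φ(X)` dominates a cover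
sum for `H^ψ(f(X))`.
-/

section Covers

variable {Z W : Type*} [MetricSpace Z] [MetricSpace W]

/-- The covers admitted at scale `ε` in the definition of `Hmeas`. -/
def IsBallCover (S : Set Z) (ε : ℝ) (c : ℕ → Z × ℝ) : Prop :=
  (∀ i, 0 ≤ (c i).2 ∧ (c i).2 ≤ ε) ∧ S ⊆ ⋃ i, ball (c i).1 (c i).2

theorem Hmeas_le_of_forall_isBallCover {φ ψ : ℝ → ℝ} {S : Set Z} {T : Set W}
    (h : ∀ δ > 0, ∃ η > 0, ∀ c, IsBallCover S η c → ∃ c', IsBallCover T δ c' ∧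
      ∑' i, ENNReal.ofReal (ψ (c' i).2) ≤ ∑' i, ENNReal.ofReal (φ (c i).2)) :
    Hmeas ψ T ≤ Hmeas φ S := by
  refine iSup₂_le fun δ hδ => ?_
  obtain ⟨η, hη, hcover⟩ := h δ hδ
  refine le_trans ?_ (le_iSup₂_of_le η hη le_rfl)
  refine le_iInf₂ fun c hc => ?_
  obtain ⟨c', hc', hsum⟩ := hcover c hc
  exact (iInf₂_le c' hc').trans hsum

theorem image_ball_subset_ball_rpow {f : Z → W} {κ ε₀ : ℝ} (hκ : 0 < κ)
    (hf : ∀ x x', 0 < dist x x' → dist x x' < ε₀ → dist (f x) (f x') < dist x x' ^ κ)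
    (x : Z) {r : ℝ} (hr : r ≤ ε₀) :
    f '' ball x r ⊆ ball (f x) (r ^ κ) := by
  rintro _ ⟨y, hy, rfl⟩
  rw [mem_ball] at hy ⊢
  rcases (dist_nonneg (x := y) (y := x)).eq_or_lt with hyx | hyx
  · rw [eq_comm, dist_eq_zero] at hyx
    subst hyx
    rw [dist_self] at hy ⊢
    exact Real.rpow_pos_of_pos hy κ
  · exact (hf y x hyx (hy.trans_le hr)).trans (Real.rpow_lt_rpow dist_nonneg hy hκ)

theorem IsBallCover.image_rpow {f : Z → W} {κ ε₀ ε : ℝ} (hκ : 0 < κ)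
    (hf : ∀ x x', 0 < dist x x' → dist x x' < ε₀ → dist (f x) (f x') < dist x x' ^ κ)
    (hε : ε ≤ ε₀) {S : Set Z} {c : ℕ → Z × ℝ} (hc : IsBallCover S ε c) :
    IsBallCover (f '' S) (ε ^ κ) fun i => (f (c i).1, (c i).2 ^ κ) := by
  obtain ⟨hradii, hcover⟩ := hc
  refine ⟨fun i => ⟨Real.rpow_nonneg (hradii i).1 κ,
    Real.rpow_le_rpow (hradii i).1 (hradii i).2 hκ.le⟩, ?_⟩
  calc f '' S ⊆ ⋃ i, f '' ball (c i).1 (c i).2 := by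
        rw [← Set.image_iUnion]; exact Set.image_mono hcover
    _ ⊆ ⋃ i, ball (f (c i).1) ((c i).2 ^ κ) :=
        Set.iUnion_mono fun i =>
          image_ball_subset_ball_rpow hκ hf _ ((hradii i).2.trans hε)

end Covers

theorem ofReal_rpow_le_ofReal {φ ψ : ℝ → ℝ} (hψ : ψ 0 = 0) {κ ε₁ : ℝ} (hκ : 0 < κ)
    (hψφ : ∀ ε : ℝ, 0 < ε → ε < ε₁ → ψ (ε ^ κ) < φ ε) {r : ℝ} (hr : 0 ≤ r) (hr₁ : r < ε₁) :
    ENNReal.ofReal (ψ (r ^ κ)) ≤ ENNReal.ofReal (φ r) := by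
  rcases hr.eq_or_lt with rfl | hr
  · simp [Real.zero_rpow hκ.ne', hψ]
  · exact ENNReal.ofReal_le_ofReal (hψφ r hr hr₁).le

theorem stmt16 {X Y : Type*} [MetricSpace X] [MetricSpace Y] (f : X → Y)
    (hf : ∀ κ : ℝ, 0 < κ → κ < 1 → ∃ ε₀ > 0, ∀ x x' : X, 0 < dist x x' →
      dist x x' < ε₀ → dist (f x) (f x') < dist x x' ^ κ)
    (φ ψ : ℝ → ℝ) (hψ : IsHausdorffFn ψ)
    (hκ : ∃ κ : ℝ, 0 < κ ∧ κ < 1 ∧ ∃ ε₁ > 0, ∀ ε : ℝ, 0 < ε → ε < ε₁ → ψ (ε ^ κ) < φ ε) :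
    Hmeas ψ (f '' Set.univ) ≤ Hmeas φ (Set.univ : Set X) := by
  obtain ⟨κ, hκ0, hκ1, ε₁, hε₁, hψφ⟩ := hκ
  obtain ⟨ε₀, hε₀, hfκ⟩ := hf κ hκ0 hκ1
  refine Hmeas_le_of_forall_isBallCover fun δ hδ => ?_
  set η := min (δ ^ κ⁻¹) (min ε₀ ε₁ / 2)
  have hη₀ : η ≤ ε₀ := (min_le_right _ _).trans (by linarith [min_le_left ε₀ ε₁, hε₀])
  have hη₁ : η < ε₁ := (min_le_right _ _).trans_lt (by linarith [min_le_right ε₀ ε₁, hε₁])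
  have hηδ : η ^ κ ≤ δ := by
    have hη : 0 ≤ η := (lt_min (Real.rpow_pos_of_pos hδ _) (by positivity)).le
    calc η ^ κ ≤ (δ ^ κ⁻¹) ^ κ := Real.rpow_le_rpow hη (min_le_left _ _) hκ0.le
      _ = δ := Real.rpow_inv_rpow hδ.le hκ0.ne'
  refine ⟨η, lt_min (Real.rpow_pos_of_pos hδ _) (by positivity), fun c hc => ?_⟩
  have hc' := hc.image_rpow hκ0 hfκ hη₀
  refine ⟨_, ⟨fun i => ⟨(hc'.1 i).1, (hc'.1 i).2.trans hηδ⟩, hc'.2⟩, ?_⟩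
  exact ENNReal.tsum_le_tsum fun i => ofReal_rpow_le_ofReal hψ.2.2.1 hκ0 hψφ
    (hc.1 i).1 ((hc.1 i).2.trans_lt hη₁)
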